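/- Under the amplitude damping channel, the toy model symmetry breaking amplitude satisfies |ŷ(x) - ŷ(-x)| ≤ ((1-γ)^{d/2} - (1-γ)^d)/2 ≤ γd/2 for all x, establishing the linear-in-depth and linear-in-noise-strength upper bound. -/

import Mathlib

open Real

/-- **Symmetry breaking bound under the amplitude damping channel.** With
`ŷ(x) = ¼((1-γ)^{d/2} + (1-γ)^d) cos x + ¼((1-γ)^{d/2} - (1-γ)^d) cos(x+2θ) + C`,
the symmetry breaking amplitude satisfies
`|ŷ(x) - ŷ(-x)| ≤ ((1-γ)^{d/2} - (1-γ)^d)/2 ≤ γd/2` for all `x`,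
establishing the linear-in-depth and linear-in-noise-strength upper bound. -/
theorem toy_model_symmetry_breaking_AD_bound
    (γ : ℝ) (h0 : 0 ≤ γ) (h1 : γ ≤ 1) (d : ℕ) (θ C : ℝ) (yhat : ℝ → ℝ)
    (hy : ∀ x : ℝ, yhat x
      = ((1 - γ) ^ ((d : ℝ) / 2) + (1 - γ) ^ (d : ℕ)) * Real.cos x / 4
        + ((1 - γ) ^ ((d : ℝ) / 2) - (1 - γ) ^ (d : ℕ)) * Real.cos (x + 2 * θ) / 4 + C) :
    (∀ x : ℝ, |yhat x - yhat (-x)| ≤ ((1 - γ) ^ ((d : ℝ) / 2) - (1 - γ) ^ (d : ℕ)) / 2) ∧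
    ((1 - γ) ^ ((d : ℝ) / 2) - (1 - γ) ^ (d : ℕ)) / 2 ≤ γ * d / 2 := by
  have hbase0 : (0:ℝ) ≤ 1 - γ := by linarith
  have hbase1 : (1:ℝ) - γ ≤ 1 := by linarith
  set a := (1 - γ) ^ ((d : ℝ) / 2) with ha
  set b := (1 - γ) ^ (d : ℕ) with hb
  have ha0 : 0 ≤ a := Real.rpow_nonneg hbase0 _
  have ha1 : a ≤ 1 := Real.rpow_le_one hbase0 hbase1 (by positivity)
  have hab : a ^ 2 = b := by
    rw [ha, ← Real.rpow_natCast ((1 - γ) ^ ((d : ℝ) / 2)) 2,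
      ← Real.rpow_mul hbase0]
    norm_num
    exact hb.symm
  have hba : b ≤ a := by
    rw [← hab]
    nlinarith
  have hb0 : 0 ≤ b := pow_nonneg hbase0 d
  have hc : 0 ≤ a - b := by linarith
  constructor
  · intro x
    rw [hy x, hy (-x), Real.cos_neg]
    have h1u : Real.cos (x + 2 * θ) ≤ 1 := Real.cos_le_one _
    have h2u : -1 ≤ Real.cos (x + 2 * θ) := Real.neg_one_le_cos _
    have h1v : Real.cos (-x + 2 * θ) ≤ 1 := Real.cos_le_one _
    have h2v : -1 ≤ Real.cos (-x + 2 * θ) := Real.neg_one_le_cos _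
    rw [abs_le]
    constructor <;> nlinarith [mul_nonneg hc (by linarith : 0 ≤ Real.cos (x + 2 * θ) + 1),
      mul_nonneg hc (by linarith : 0 ≤ 1 - Real.cos (x + 2 * θ)),
      mul_nonneg hc (by linarith : 0 ≤ Real.cos (-x + 2 * θ) + 1),
      mul_nonneg hc (by linarith : 0 ≤ 1 - Real.cos (-x + 2 * θ))]
  · have hbern : 1 + (d : ℝ) * (-γ) ≤ (1 + (-γ)) ^ d :=
      one_add_mul_le_pow (by linarith) d
    rw [show (1:ℝ) + -γ = 1 - γ by ring] at hbern
    rw [← hb] at hbern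
    linarith
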